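/- arXiv:2109.02721 — 7 statements merged into one kernel-verified Lean document; each statement's English description precedes it below -/
import Mathlib

section
/- The relation I = {(x,y,z) ∈ ℚ³ | x = y → y = z} is primitive-positively definable from BetwC = {(x,y,z) ∈ ℚ³ | (x < y < z) ∨ (x > y > z) ∨ (x = y = z)}; concretely, for all x, y, z ∈ ℚ, (x = y → y = z) holds if and only if there exist u, v ∈ ℚ with (x,y,u) ∈ BetwC, (x,y,v) ∈ BetwC, and (u,v,z) ∈ BetwC. -/
def BetwC (x y z : ℚ) : Prop :=
  (x < y ∧ y < z) ∨ (x > y ∧ y > z) ∨ (x = y ∧ y = z)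

theorem stmt_0 :
    ∀ x y z : ℚ, (x = y → y = z) ↔
      ∃ u v : ℚ, BetwC x y u ∧ BetwC x y v ∧ BetwC u v z := by
  intro x y z
  constructor
  · intro h
    rcases eq_or_ne x y with hxy | hxy
    · exact ⟨z, z, Or.inr (Or.inr ⟨hxy, h hxy⟩), Or.inr (Or.inr ⟨hxy, h hxy⟩),
        Or.inr (Or.inr ⟨rfl, rfl⟩)⟩
    · rcases lt_or_gt_of_ne hxy with hlt | hgt
      · rcases le_or_gt z y with hz | hz
        · exact ⟨y + 2, y + 1, Or.inl ⟨hlt, by linarith⟩, Or.inl ⟨hlt, by linarith⟩,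
            Or.inr (Or.inl ⟨by linarith, by linarith⟩)⟩
        · refine ⟨y + (z - y)/3, y + 2*(z - y)/3, Or.inl ⟨hlt, by linarith⟩,
            Or.inl ⟨hlt, by linarith⟩, Or.inl ⟨by linarith, by linarith⟩⟩
      · rcases le_or_gt y z with hz | hz
        · exact ⟨y - 2, y - 1, Or.inr (Or.inl ⟨hgt, by linarith⟩),
            Or.inr (Or.inl ⟨hgt, by linarith⟩), Or.inl ⟨by linarith, by linarith⟩⟩
        · refine ⟨y - (y - z)/3, y - 2*(y - z)/3, Or.inr (Or.inl ⟨hgt, by linarith⟩),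
            Or.inr (Or.inl ⟨hgt, by linarith⟩), Or.inr (Or.inl ⟨by linarith, by linarith⟩)⟩
  · rintro ⟨u, v, hu, hv, huv⟩ hxy
    subst hxy
    rcases hu with ⟨h1, _⟩ | ⟨h1, _⟩ | ⟨_, h1⟩ <;>
      [exact absurd h1 (lt_irrefl _); exact absurd h1 (lt_irrefl _); skip]
    rcases hv with ⟨h2, _⟩ | ⟨h2, _⟩ | ⟨_, h2⟩ <;>
      [exact absurd h2 (lt_irrefl _); exact absurd h2 (lt_irrefl _); skip]
    subst h1; subst h2
    rcases huv with ⟨h3, h4⟩ | ⟨h3, h4⟩ | ⟨_, h3⟩ <;> first | exact absurd h3 (lt_irrefl _) | exact h3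
end

section
/- The relation I = {(x,y,z) ∈ ℚ³ | x = y → y = z} is primitive-positively definable from CyclC = {(x,y,z) ∈ ℚ³ | (x < y < z) ∨ (y < z < x) ∨ (z < x < y) ∨ (x = y = z)}; concretely, for all x, y, z ∈ ℚ, (x = y → y = z) holds if and only if there exist u, v ∈ ℚ with (x,y,u) ∈ CyclC, (x,y,v) ∈ CyclC, and (u,v,z) ∈ CyclC. -/
def CyclC (x y z : ℚ) : Prop :=
  (x < y ∧ y < z) ∨ (y < z ∧ z < x) ∨ (z < x ∧ x < y) ∨ (x = y ∧ y = z)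

theorem stmt_1 :
    ∀ x y z : ℚ, (x = y → y = z) ↔
      ∃ u v : ℚ, CyclC x y u ∧ CyclC x y v ∧ CyclC u v z := by
  intro x y z
  constructor
  · intro h
    by_cases hxy : x = y
    · subst hxy
      have hz := h rfl
      subst hz
      exact ⟨x, x, Or.inr (Or.inr (Or.inr ⟨rfl, rfl⟩)),
        Or.inr (Or.inr (Or.inr ⟨rfl, rfl⟩)), Or.inr (Or.inr (Or.inr ⟨rfl, rfl⟩))⟩
    · rcases lt_or_gt_of_ne hxy with hlt | hgt
      · have hx : min x z ≤ x := min_le_left x z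
        have hz' : min x z ≤ z := min_le_right x z
        refine ⟨min x z - 2, min x z - 1, ?_, ?_, ?_⟩
        · exact Or.inr (Or.inr (Or.inl ⟨by linarith, hlt⟩))
        · exact Or.inr (Or.inr (Or.inl ⟨by linarith, hlt⟩))
        · exact Or.inl ⟨by linarith, by linarith⟩
      · rcases le_or_gt z y with hzy | hyz
        · refine ⟨y + (x - y)/3, y + 2*(x - y)/3, ?_, ?_, ?_⟩
          · exact Or.inr (Or.inl ⟨by linarith, by linarith⟩)
          · exact Or.inr (Or.inl ⟨by linarith, by linarith⟩)
          · exact Or.inr (Or.inr (Or.inl ⟨by linarith, by linarith⟩))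
        · have h1 : y < min x z := lt_min hgt hyz
          have hx : min x z ≤ x := min_le_left x z
          have hz' : min x z ≤ z := min_le_right x z
          refine ⟨y + (min x z - y)/3, y + 2*(min x z - y)/3, ?_, ?_, ?_⟩
          · exact Or.inr (Or.inl ⟨by linarith, by linarith⟩)
          · exact Or.inr (Or.inl ⟨by linarith, by linarith⟩)
          · exact Or.inl ⟨by linarith, by linarith⟩
  · rintro ⟨u, v, h1, h2, h3⟩ hxy
    subst hxy
    have hu : u = x := by
      rcases h1 with ⟨a, b⟩ | ⟨a, b⟩ | ⟨a, b⟩ | ⟨a, b⟩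
      · linarith
      · linarith
      · linarith
      · exact b.symm
    have hv : v = x := by
      rcases h2 with ⟨a, b⟩ | ⟨a, b⟩ | ⟨a, b⟩ | ⟨a, b⟩
      · linarith
      · linarith
      · linarith
      · exact b.symm
    subst hu; subst hv
    rcases h3 with ⟨a, b⟩ | ⟨a, b⟩ | ⟨a, b⟩ | ⟨a, b⟩
    · linarith
    · linarith
    · linarith
    · exact b
end

section
/- Let f : ℚ → ℚ take infinitely many values on the interval (a,b) (where a, b ∈ ℚ ∪ {−∞, +∞}). Then there exists a strictly monotone (increasing or decreasing) infinite sequence q₁, q₂, … of rationals contained in (a,b) such that the sequence f(q₁), f(q₂), … is also strictly monotone (increasing or decreasing). -/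
lemma key_subseq {g : ℕ → ℚ} (hg : Function.Injective g) :
    ∃ φ : ℕ → ℕ, StrictMono φ ∧ (StrictMono (g ∘ φ) ∨ StrictAnti (g ∘ φ)) := by
  obtain ⟨e, h⟩ := exists_increasing_or_nonincreasing_subseq ((· < ·) : ℚ → ℚ → Prop) g
  refine ⟨e, e.strictMono, ?_⟩
  cases h with
  | inl h => exact Or.inl fun m n mn => h m n mn
  | inr h =>
    refine Or.inr fun m n mn => ?_
    have hne : g (e n) ≠ g (e m) := fun heq => (e.injective.ne mn.ne).symm (hg heq)
    exact lt_of_le_of_ne (not_lt.1 (h m n mn)) hne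

theorem stmt_5 (f : ℚ → ℚ) (a b : WithBot (WithTop ℚ))
    (hinf : (f '' {x : ℚ | a < ((x : WithTop ℚ) : WithBot (WithTop ℚ)) ∧
      ((x : WithTop ℚ) : WithBot (WithTop ℚ)) < b}).Infinite) :
    ∃ q : ℕ → ℚ,
      (∀ i, a < ((q i : WithTop ℚ) : WithBot (WithTop ℚ)) ∧
        ((q i : WithTop ℚ) : WithBot (WithTop ℚ)) < b) ∧
      (StrictMono q ∨ StrictAnti q) ∧
      (StrictMono (f ∘ q) ∨ StrictAnti (f ∘ q)) := by
  set S := {x : ℚ | a < ((x : WithTop ℚ) : WithBot (WithTop ℚ)) ∧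
      ((x : WithTop ℚ) : WithBot (WithTop ℚ)) < b}
  -- injective sequence of values
  let y : ℕ → ℚ := fun n => (hinf.natEmbedding _ n : ℚ)
  have hy_inj : Function.Injective y := fun m n h =>
    (hinf.natEmbedding _).injective (Subtype.ext h)
  have hy_mem : ∀ n, y n ∈ f '' S := fun n => (hinf.natEmbedding _ n).2
  choose x hxS hfx using hy_mem
  have hfx_inj : Function.Injective (f ∘ x) := by
    intro m n h
    apply hy_inj
    rw [← hfx m, ← hfx n]; exact h
  have hx_inj : Function.Injective x := fun m n h => hfx_inj (by simp [Function.comp, h])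
  obtain ⟨φ, hφ, hmono⟩ := key_subseq hx_inj
  have hfxφ_inj : Function.Injective (f ∘ x ∘ φ) := hfx_inj.comp hφ.injective
  obtain ⟨ψ, hψ, hmono2⟩ := key_subseq (g := f ∘ x ∘ φ) hfxφ_inj
  refine ⟨x ∘ φ ∘ ψ, fun i => hxS _, ?_, ?_⟩
  · cases hmono with
    | inl h => exact Or.inl (h.comp hψ)
    | inr h => exact Or.inr (h.comp_strictMono hψ)
  · exact hmono2
end

section
/- Let su₁ : ℚ → ℚ be defined by su₁(x) = 0 for x < 0 and su₁(x) = 1 for x ≥ 0, let ic(x) = min(x, 0), and let ci(x) = max(x, 0). Then for every relation R ⊆ ℚⁿ that is preserved by ic, ci, and all order automorphisms of (ℚ, <), the relation R is also preserved by su₁. -/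
/-- A unary operation preserves an `n`-ary relation on ℚ. -/
def PresU {n : ℕ} (f : ℚ → ℚ) (R : Set (Fin n → ℚ)) : Prop :=
  ∀ t ∈ R, (f ∘ t) ∈ R

noncomputable def su₁ (x : ℚ) : ℚ := if x < 0 then 0 else 1

/-- The affine order automorphism `x ↦ a * x + 1` of ℚ for `a > 0`. -/
def affIso (a : ℚ) (ha : 0 < a) : ℚ ≃o ℚ where
  toFun := fun x => a * x + 1
  invFun := fun y => (y - 1) / a
  left_inv := by intro x; field_simp; ring
  right_inv := by intro y; field_simp; ring
  map_rel_iff' := by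
    intro x y
    simp only [Equiv.coe_fn_mk, add_le_add_iff_right]
    exact mul_le_mul_iff_right₀ ha

theorem stmt_10 (n : ℕ) (R : Set (Fin n → ℚ))
    (hic : PresU (fun x : ℚ => min x 0) R)
    (hci : PresU (fun x : ℚ => max x 0) R)
    (haut : ∀ e : ℚ ≃o ℚ, PresU (⇑e) R) :
    PresU su₁ R := by
  intro t ht
  -- m : a negative rational with t i ≤ m for every negative entry t i
  set S : Finset ℚ :=
    insert (-1 : ℚ) ((Finset.univ.filter (fun i => t i < 0)).image t) with hSdef
  have hS : S.Nonempty := ⟨-1, Finset.mem_insert_self _ _⟩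
  set m := S.max' hS with hmdef
  have hm0 : m < 0 := by
    have hmem := S.max'_mem hS
    rcases Finset.mem_insert.mp hmem with h | h
    swap
    obtain ⟨i, hi, hi2⟩ := Finset.mem_image.mp h
    rotate_left
    · rw [hmdef, h]; norm_num
    · rw [hmdef, ← hi2]; exact (Finset.mem_filter.mp hi).2
  have hle : ∀ i, t i < 0 → t i ≤ m := by
    intro i hi
    apply S.le_max'
    exact Finset.mem_insert.mpr (Or.inr (Finset.mem_image.mpr
      ⟨i, Finset.mem_filter.mpr ⟨Finset.mem_univ i, hi⟩, rfl⟩))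
  have hmne : m ≠ 0 := ne_of_lt hm0
  set a : ℚ := -1 / m with hadef
  have ha : 0 < a := by
    rw [hadef]
    exact div_pos_iff.mpr (Or.inr ⟨by norm_num, hm0⟩)
  have ham : a * m = -1 := by
    rw [hadef]; field_simp
  have key := hci _ (haut (affIso a ha) _ (hic t ht))
  have heq : ((fun x : ℚ => max x 0) ∘ ⇑(affIso a ha) ∘ ((fun x : ℚ => min x 0) ∘ t))
      = su₁ ∘ t := by
    funext i
    simp only [Function.comp_apply, su₁, affIso, RelIso.coe_fn_mk, Equiv.coe_fn_mk]
    by_cases h : t i < 0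
    · rw [if_pos h, min_eq_left h.le]
      have h1 : a * t i ≤ a * m := mul_le_mul_of_nonneg_left (hle i h) ha.le
      rw [ham] at h1
      exact max_eq_right (by linarith)
    · rw [if_neg h]
      have : min (t i) 0 = 0 := min_eq_right (not_lt.mp h)
      rw [this, mul_zero, zero_add]
      exact max_eq_left (by norm_num)
  rwa [← heq]
end

section
/- Suppose a relation R ⊆ ℚⁿ is preserved by a unary operation f : ℚ → ℚ and by all order automorphisms of (ℚ, <), and suppose there exist rationals q₁ < q₂ < ⋯ (an infinite strictly increasing sequence) with f(q₁) > f(q₂) > ⋯ strictly decreasing. Then R is preserved by the negation operation x ↦ −x. -/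
lemma affine_exists (c d : ℚ) (hc : 0 < c) :
    ∃ e : ℚ ≃o ℚ, ∀ x, e x = c * x + d := by
  have hmono : StrictMono (fun x : ℚ => c * x + d) := fun x y hxy => by
    dsimp; nlinarith
  have hsurj : Function.Surjective (fun x : ℚ => c * x + d) := fun y => by
    refine ⟨(y - d) / c, ?_⟩
    field_simp
    ring
  exact ⟨hmono.orderIsoOfSurjective _ hsurj, fun x => rfl⟩

lemma glue_exists (c : ℚ) (e₁ e₂ : ℚ ≃o ℚ) (h : e₁ c = e₂ c) :
    ∃ e : ℚ ≃o ℚ, ∀ x, e x = if x ≤ c then e₁ x else e₂ x := by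
  set g : ℚ → ℚ := fun x => if x ≤ c then e₁ x else e₂ x with hg
  have hmono : StrictMono g := by
    intro x y hxy
    simp only [hg]
    by_cases hx : x ≤ c <;> by_cases hy : y ≤ c
    · rw [if_pos hx, if_pos hy]; exact e₁.strictMono hxy
    · rw [if_pos hx, if_neg hy]
      calc e₁ x ≤ e₁ c := e₁.monotone hx
        _ = e₂ c := h
        _ < e₂ y := e₂.strictMono (lt_of_not_ge hy)
    · exact absurd (hxy.le.trans hy) hx
    · rw [if_neg hx, if_neg hy]; exact e₂.strictMono hxy
  have hsurj : Function.Surjective g := by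
    intro y
    by_cases hy : y ≤ e₁ c
    · refine ⟨e₁.symm y, ?_⟩
      have : e₁.symm y ≤ c := by
        have := e₁.symm.monotone hy
        simpa using this
      simp [hg, this]
    · refine ⟨e₂.symm y, ?_⟩
      have hcy : e₂ c < y := by rw [← h]; exact lt_of_not_ge hy
      have : ¬ e₂.symm y ≤ c := by
        intro hle
        have := e₂.monotone hle
        simp at this
        exact absurd (this.trans_lt hcy).false id
      simp [hg, this]
  exact ⟨hmono.orderIsoOfSurjective _ hsurj, fun x => rfl⟩

lemma twoPoint_exists (p r p' r' : ℚ) (hp : p < p') (hr : r < r') :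
    ∃ e : ℚ ≃o ℚ, e p = r ∧ e p' = r' := by
  obtain ⟨L, hL⟩ := affine_exists ((r' - r) / (p' - p)) (r - (r' - r) / (p' - p) * p)
    (div_pos (by linarith) (by linarith))
  obtain ⟨M, hM⟩ := affine_exists 1 (r' - p') one_pos
  have hLp : L p = r := by rw [hL]; ring
  have hLp' : L p' = r' := by
    have hne : p' - p ≠ 0 := by linarith
    rw [hL]; field_simp; ring
  have hMp' : M p' = r' := by rw [hM]; ring
  obtain ⟨e, he⟩ := glue_exists p' L M (by rw [hLp', hMp'])
  exact ⟨e, by rw [he, if_pos hp.le, hLp], by rw [he, if_pos le_rfl, hLp']⟩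

lemma ext_iso : ∀ (l : List (ℚ × ℚ)),
    l.Pairwise (fun a b => a.1 < b.1 ∧ a.2 < b.2) →
    ∃ e : ℚ ≃o ℚ, ∀ pr ∈ l, e pr.1 = pr.2 := by
  intro l
  induction l with
  | nil => exact fun _ => ⟨OrderIso.refl ℚ, fun pr h => absurd h List.not_mem_nil⟩
  | cons a l' ih =>
    intro hp
    rw [List.pairwise_cons] at hp
    obtain ⟨ha, hl'⟩ := hp
    obtain ⟨e', he'⟩ := ih hl'
    match l' with
    | [] =>
      obtain ⟨e, he⟩ := affine_exists 1 (a.2 - a.1) one_pos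
      refine ⟨e, fun pr hpr => ?_⟩
      simp only [List.mem_singleton] at hpr
      subst hpr
      rw [he]; ring
    | b :: l'' =>
      have hab := ha b List.mem_cons_self
      obtain ⟨L, hL1, hL2⟩ := twoPoint_exists a.1 a.2 b.1 b.2 hab.1 hab.2
      have heb : e' b.1 = b.2 := he' b List.mem_cons_self
      obtain ⟨e, he⟩ := glue_exists b.1 L e' (by rw [hL2, heb])
      refine ⟨e, fun pr hpr => ?_⟩
      rcases List.mem_cons.mp hpr with h | h
      · subst h; rw [he, if_pos hab.1.le, hL1]
      · rcases List.mem_cons.mp h with h2 | h2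
        · subst h2; rw [he, if_pos le_rfl, hL2]
        · have hb : b.1 < pr.1 := ((List.pairwise_cons.mp hl').1 pr h2).1
          rw [he, if_neg (not_le.mpr hb)]
          exact he' pr h

theorem stmt_11' (n : ℕ) (R : Set (Fin n → ℚ)) (f : ℚ → ℚ)
    (hf : PresU f R)
    (haut : ∀ e : ℚ ≃o ℚ, PresU (⇑e) R)
    (q : ℕ → ℚ) (hq : StrictMono q) (hfq : StrictAnti (f ∘ q)) :
    PresU (fun x : ℚ => -x) R := by
  intro t ht
  set S : Finset ℚ := Finset.image t Finset.univ with hS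
  set ps : List ℚ := S.sort (· ≤ ·) with hps
  set k := ps.length with hk
  have hsort : ps.SortedLT := S.sortedLT_sort
  have hmono : StrictMono ps.get := hsort.strictMono_get
  -- first automorphism
  obtain ⟨e₁, he₁⟩ := ext_iso (List.ofFn (fun i : Fin k => (ps.get i, q i))) (by
    rw [List.pairwise_ofFn]
    intro i j hij
    exact ⟨hmono hij, hq (by exact_mod_cast hij)⟩)
  -- second automorphism
  obtain ⟨e₂, he₂⟩ := ext_iso (List.ofFn (fun i : Fin k => (f (q i.rev), -(ps.get i.rev)))) (by
    rw [List.pairwise_ofFn]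
    intro i j hij
    have hrev : j.rev < i.rev := by simpa using Fin.rev_lt_rev.mpr hij
    refine ⟨hfq (by exact_mod_cast hrev), ?_⟩
    simpa using hmono hrev)
  have h1 : (⇑e₁) ∘ t ∈ R := haut e₁ t ht
  have h2 : f ∘ ((⇑e₁) ∘ t) ∈ R := hf _ h1
  have h3 : (⇑e₂) ∘ (f ∘ ((⇑e₁) ∘ t)) ∈ R := haut e₂ _ h2
  have heq : (fun x : ℚ => -x) ∘ t = (⇑e₂) ∘ (f ∘ ((⇑e₁) ∘ t)) := by
    funext i
    have hv : t i ∈ ps := by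
      rw [hps, Finset.mem_sort]
      exact Finset.mem_image_of_mem t (Finset.mem_univ i)
    obtain ⟨j, hj⟩ := List.mem_iff_get.mp hv
    have hj1 : e₁ (t i) = q j := by
      rw [← hj]
      exact he₁ (ps.get j, q j) (List.mem_ofFn.mpr ⟨j, rfl⟩)
    have hj2 : e₂ (f (q j)) = -(ps.get j) := by
      have := he₂ (f (q j.rev.rev), -(ps.get j.rev.rev))
        (List.mem_ofFn.mpr ⟨j.rev, rfl⟩)
      simpa [Fin.rev_rev] using this
    simp only [Function.comp_apply]
    rw [hj1, hj2, hj]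
  rw [heq]
  exact h3

theorem stmt_11 (n : ℕ) (R : Set (Fin n → ℚ)) (f : ℚ → ℚ)
    (hf : PresU f R)
    (haut : ∀ e : ℚ ≃o ℚ, PresU (⇑e) R)
    (q : ℕ → ℚ) (hq : StrictMono q) (hfq : StrictAnti (f ∘ q)) :
    PresU (fun x : ℚ => -x) R := by
  exact stmt_11' n R f hf haut q hq hfq
end

section
/- Let R ⊆ ℚⁿ be preserved by the operation su₁ (su₁(x) = 0 for x < 0 and su₁(x) = 1 for x ≥ 0) and by all order automorphisms of (ℚ, <). If R contains a tuple with k pairwise distinct values, then for every partition of its index set into two nonempty order-convex blocks, R contains a corresponding ordered 2-partition tuple: i.e., if t ∈ R has values p₁ < ⋯ < pₖ on blocks Π₁,…,Πₖ, then for every 1 ≤ j < k the tuple s with s[Π₁ ∪ ⋯ ∪ Πⱼ] = 0 and s[Π_{j+1} ∪ ⋯ ∪ Πₖ] = 1 is in R. -/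
theorem stmt_13 (n k : ℕ) (R : Set (Fin n → ℚ))
    (hsu : PresU su₁ R)
    (haut : ∀ e : ℚ ≃o ℚ, PresU (⇑e) R)
    (t : Fin n → ℚ) (ht : t ∈ R)
    (p : Fin k → ℚ) (hp : StrictMono p)
    (hvals : ∀ i : Fin n, ∃ a : Fin k, t i = p a)
    (hblocks : ∀ a : Fin k, ∃ i : Fin n, t i = p a) :
    ∀ j : Fin k, 0 < (j : ℕ) →
      (fun i : Fin n => if t i < p j then (0 : ℚ) else 1) ∈ R := by
  intro j _
  have h := hsu _ (haut (OrderIso.subRight (p j)) t ht)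
  convert h using 1
  funext i
  simp [su₁, Function.comp, sub_neg]
end

section
/- Suppose R ⊆ ℚⁿ is preserved by a unary operation g : ℚ → ℚ and by all order automorphisms of (ℚ, <), and suppose there exist rationals q₁ < q₂ < ⋯ < c₁ < c₂ with g(q₁) < g(q₂) < ⋯ strictly increasing and g(c₁) = g(c₂). Then R is preserved by the operation ic(x) = min(x, 0). -/
namespace Stmt19

open Finset

noncomputable section

def rampFun (p s x : ℚ) : ℚ := if x ≤ p then x else p + (x - p) * s

lemma rampFun_mono {p s : ℚ} (hs : 0 < s) : StrictMono (rampFun p s) := by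
  intro u v huv
  unfold rampFun
  split_ifs with h1 h2 h2
  · exact huv
  · push_neg at h2
    nlinarith
  · push_neg at h1
    linarith
  · push_neg at h1 h2
    nlinarith

lemma rampFun_surj {p s : ℚ} (hs : 0 < s) : Function.Surjective (rampFun p s) := by
  intro z
  refine ⟨rampFun p s⁻¹ z, ?_⟩
  unfold rampFun
  rcases le_or_gt z p with h | h
  · simp [h]
  · have h1 : ¬ z ≤ p := not_le.2 h
    rw [if_neg h1]
    have h2 : p < p + (z - p) * s⁻¹ := by
      have : 0 < (z - p) * s⁻¹ := mul_pos (by linarith) (inv_pos.2 hs)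
      linarith
    rw [if_neg (not_le.2 h2)]
    field_simp
    ring

def ramp (p s : ℚ) (hs : 0 < s) : ℚ ≃o ℚ :=
  StrictMono.orderIsoOfSurjective (rampFun p s) (rampFun_mono hs) (rampFun_surj hs)

lemma ramp_apply (p s : ℚ) (hs : 0 < s) (x : ℚ) : ramp p s hs x = rampFun p s x := by
  rw [ramp, StrictMono.coe_orderIsoOfSurjective]

lemma exists_ramp (p y b : ℚ) (hpy : p < y) (hpb : p < b) :
    ∃ r : ℚ ≃o ℚ, r y = b ∧ ∀ z, z ≤ p → r z = z := by
  have hs : 0 < (b - p) / (y - p) := div_pos (by linarith) (by linarith)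
  refine ⟨ramp p _ hs, ?_, fun z hz => ?_⟩
  · rw [ramp_apply]
    unfold rampFun
    rw [if_neg (not_le.2 hpy)]
    rw [mul_comm, div_mul_cancel₀ _ (by linarith : y - p ≠ 0)]
    ring
  · rw [ramp_apply]
    unfold rampFun
    rw [if_pos hz]

lemma exists_extend : ∀ (k : ℕ) (a b : Fin k → ℚ), StrictMono a → StrictMono b →
    ∃ e : ℚ ≃o ℚ, ∀ i, e (a i) = b i := by
  intro k
  induction k with
  | zero => exact fun a b _ _ => ⟨OrderIso.refl ℚ, fun i => i.elim0⟩
  | succ k ih =>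
    intro a b ha hb
    have hcs : StrictMono (Fin.castSucc : Fin k → Fin (k + 1)) := fun i j h => by
      simpa [Fin.castSucc_lt_castSucc_iff] using h
    obtain ⟨e, he⟩ := ih (a ∘ Fin.castSucc) (b ∘ Fin.castSucc) (ha.comp hcs) (hb.comp hcs)
    set y := e (a (Fin.last k)) with hy
    obtain ⟨p, hp1, hp2, hp3⟩ :
        ∃ p : ℚ, p < y ∧ p < b (Fin.last k) ∧ ∀ j : Fin k, b (Fin.castSucc j) ≤ p := by
      rcases Nat.eq_zero_or_pos k with rfl | hk
      · refine ⟨min y (b (Fin.last 0)) - 1, ?_, ?_, fun j => j.elim0⟩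
        · have := min_le_left y (b (Fin.last 0)); linarith
        · have := min_le_right y (b (Fin.last 0)); linarith
      · set j0 : Fin k := ⟨k - 1, by omega⟩
        refine ⟨b (Fin.castSucc j0), ?_, ?_, ?_⟩
        · calc b (Fin.castSucc j0) = e (a (Fin.castSucc j0)) := (he j0).symm
            _ < y := e.strictMono (ha (Fin.castSucc_lt_last j0))
        · exact hb (Fin.castSucc_lt_last j0)
        · intro j
          exact hb.monotone (Fin.castSucc_le_castSucc_iff.2 (by
            rw [Fin.le_def]; simp [j0]; omega))
    obtain ⟨r, hr1, hr2⟩ := exists_ramp p y (b (Fin.last k)) hp1 hp2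
    refine ⟨e.trans r, fun i => ?_⟩
    rcases Fin.eq_castSucc_or_eq_last i with ⟨j, rfl⟩ | rfl
    · have h1 : e (a (Fin.castSucc j)) = b (Fin.castSucc j) := he j
      simp only [OrderIso.trans_apply, h1]
      exact hr2 _ (hp3 j)
    · simp only [OrderIso.trans_apply, ← hy]
      exact hr1

lemma strictMono_snoc {k : ℕ} {f : Fin k → ℚ} (hf : StrictMono f) (c : ℚ)
    (hc : ∀ i, f i < c) : StrictMono (Fin.snoc f c : Fin (k + 1) → ℚ) := by
  intro i j hij
  rcases Fin.eq_castSucc_or_eq_last j with ⟨j', rfl⟩ | rfl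
  · rcases Fin.eq_castSucc_or_eq_last i with ⟨i', rfl⟩ | rfl
    · simp only [Fin.snoc_castSucc]
      exact hf (Fin.castSucc_lt_castSucc_iff.1 hij)
    · exact absurd hij (by simpa using (Fin.castSucc_lt_last j').le.not_gt)
  · rcases Fin.eq_castSucc_or_eq_last i with ⟨i', rfl⟩ | rfl
    · simp only [Fin.snoc_castSucc, Fin.snoc_last]
      exact hc i'
    · exact absurd hij (lt_irrefl _)

lemma strictMono_cons {k : ℕ} {f : Fin k → ℚ} (hf : StrictMono f) (c : ℚ)
    (hc : ∀ i, c < f i) : StrictMono (Fin.cons c f : Fin (k + 1) → ℚ) := by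
  intro i j hij
  rcases Fin.eq_zero_or_eq_succ j with rfl | ⟨j', rfl⟩
  · exact absurd hij (Fin.not_lt_zero i)
  · rcases Fin.eq_zero_or_eq_succ i with rfl | ⟨i', rfl⟩
    · simp only [Fin.cons_zero, Fin.cons_succ]
      exact hc j'
    · simp only [Fin.cons_succ]
      exact hf (by simpa [Fin.succ_lt_succ_iff] using hij)

lemma extend_finset (S : Finset ℚ) (f : ℚ → ℚ)
    (hf : ∀ u ∈ S, ∀ v ∈ S, u < v → f u < f v) :
    ∃ e : ℚ ≃o ℚ, ∀ v ∈ S, e v = f v := by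
  set A := S.orderIsoOfFin rfl with hA
  have hAmono : StrictMono (fun i => (A i : ℚ)) := fun i j h => by
    exact_mod_cast A.strictMono h
  have hBmono : StrictMono (fun i => f (A i : ℚ)) := fun i j h =>
    hf _ (A i).2 _ (A j).2 (hAmono h)
  obtain ⟨e, he⟩ := exists_extend S.card _ _ hAmono hBmono
  refine ⟨e, fun v hv => ?_⟩
  have := he (A.symm ⟨v, hv⟩)
  simpa using this

lemma enum_spec (S : Finset ℚ) : ∃ a : Fin S.card → ℚ,
    StrictMono a ∧ (∀ j, a j ∈ S) ∧ ∀ v ∈ S, ∃ j, a j = v := by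
  set A := S.orderIsoOfFin rfl
  exact ⟨fun j => (A j : ℚ), fun i j h => by exact_mod_cast A.strictMono h,
    fun j => (A j).2, fun v hv => ⟨A.symm ⟨v, hv⟩, by simp⟩⟩

lemma mergeB {n : ℕ} {R : Set (Fin n → ℚ)} {g : ℚ → ℚ}
    (hg : PresU g R) (haut : ∀ e : ℚ ≃o ℚ, PresU (⇑e) R)
    {Q : ℕ → ℚ} {c₁ c₂ : ℚ}
    (hQ : StrictMono Q) (hQc : ∀ i, Q i < c₁) (hc : c₁ < c₂)
    (hgQ : StrictMono (g ∘ Q)) (hgc : g c₁ = g c₂)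
    (hB : ∀ i, g c₁ < g (Q i))
    {t : Fin n → ℚ} (ht : t ∈ R) {x y w : ℚ}
    (hxy : x < y)
    (htri : ∀ i, t i < x ∨ t i = x ∨ t i = y)
    (hw : ∀ i, w < t i) :
    (fun i => if x ≤ t i then w else t i) ∈ R := by
  classical
  set S₀ := (Finset.image t Finset.univ).filter (fun v => v < x) with hS₀def
  obtain ⟨a₀, ha₀, ha₀S, ha₀surj⟩ := enum_spec S₀
  have ha₀x : ∀ j, a₀ j < x := fun j => (Finset.mem_filter.1 (ha₀S j)).2
  have ha₀val : ∀ j, ∃ i, t i = a₀ j := fun j => by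
    obtain ⟨i, _, hi⟩ := Finset.mem_image.1 (Finset.mem_filter.1 (ha₀S j)).1
    exact ⟨i, hi⟩
  have ha₀w : ∀ j, w < a₀ j := fun j => by
    obtain ⟨i, hi⟩ := ha₀val j
    exact hi ▸ hw i
  have hsurj : ∀ i, t i < x → ∃ j, a₀ j = t i := fun i h =>
    ha₀surj _ (Finset.mem_filter.2 ⟨Finset.mem_image_of_mem t (Finset.mem_univ i), h⟩)
  have hsrc : StrictMono (Fin.snoc (Fin.snoc a₀ x : Fin (S₀.card+1) → ℚ) y : Fin (S₀.card+2) → ℚ) := by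
    refine strictMono_snoc (strictMono_snoc ha₀ x ha₀x) y ?_
    intro i
    rcases Fin.eq_castSucc_or_eq_last i with ⟨j, rfl⟩ | rfl
    · simp only [Fin.snoc_castSucc]; exact (ha₀x j).trans hxy
    · simp only [Fin.snoc_last]; exact hxy
  have htgt : StrictMono (Fin.snoc (Fin.snoc (fun j : Fin S₀.card => Q j) c₁ : Fin (S₀.card+1) → ℚ) c₂ :
      Fin (S₀.card+2) → ℚ) := by
    refine strictMono_snoc (strictMono_snoc (fun i j h => hQ h) c₁ (fun j => hQc j)) c₂ ?_
    intro i
    rcases Fin.eq_castSucc_or_eq_last i with ⟨j, rfl⟩ | rfl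
    · simp only [Fin.snoc_castSucc]; exact (hQc j).trans hc
    · simp only [Fin.snoc_last]; exact hc
  obtain ⟨e₁, he₁⟩ := exists_extend (S₀.card+2) _ _ hsrc htgt
  have h2 : (g ∘ (⇑e₁ ∘ t)) ∈ R := hg _ (haut e₁ t ht)
  have hsrc2 : StrictMono (Fin.cons (g c₁) (fun j : Fin S₀.card => g (Q j)) : Fin (S₀.card+1) → ℚ) :=
    strictMono_cons (fun i j h => hgQ h) _ (fun j => hB j)
  have htgt2 : StrictMono (Fin.cons w a₀ : Fin (S₀.card+1) → ℚ) := strictMono_cons ha₀ _ ha₀w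
  obtain ⟨e₂, he₂⟩ := exists_extend (S₀.card+1) _ _ hsrc2 htgt2
  have h3 := haut e₂ _ h2
  have heq : (⇑e₂ ∘ (g ∘ (⇑e₁ ∘ t))) = fun i => if x ≤ t i then w else t i := by
    funext i
    simp only [Function.comp_apply]
    rcases htri i with h | h | h
    · obtain ⟨j, hj⟩ := hsurj i h
      rw [← hj, if_neg (not_le.2 (ha₀x j))]
      have e1j : e₁ (a₀ j) = Q j := by
        have h' := he₁ (Fin.castSucc (Fin.castSucc j))
        simpa [Fin.snoc_castSucc] using h'
      rw [e1j]
      have h'' := he₂ (Fin.succ j)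
      simpa [Fin.cons_succ] using h''
    · have e1x : e₁ x = c₁ := by
        have h' := he₁ (Fin.castSucc (Fin.last S₀.card))
        simpa [Fin.snoc_castSucc, Fin.snoc_last] using h'
      have e2c : e₂ (g c₁) = w := by
        have h' := he₂ 0
        simpa [Fin.cons_zero] using h'
      rw [h, e1x, e2c, if_pos le_rfl]
    · have e1y : e₁ y = c₂ := by
        have h' := he₁ (Fin.last (S₀.card+1))
        simpa [Fin.snoc_last] using h'
      have e2c : e₂ (g c₁) = w := by
        have h' := he₂ 0
        simpa [Fin.cons_zero] using h'
      rw [h, e1y, ← hgc, e2c, if_pos hxy.le]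
  exact heq ▸ h3

lemma rotateB {n : ℕ} {R : Set (Fin n → ℚ)} {g : ℚ → ℚ}
    (hg : PresU g R) (haut : ∀ e : ℚ ≃o ℚ, PresU (⇑e) R)
    {Q : ℕ → ℚ} {c₁ : ℚ}
    (hQ : StrictMono Q) (hQc : ∀ i, Q i < c₁)
    (hgQ : StrictMono (g ∘ Q))
    (hB : ∀ i, g c₁ < g (Q i))
    {t : Fin n → ℚ} (ht : t ∈ R) {M w : ℚ}
    (hM : ∀ i, t i ≤ M)
    (hw : ∀ i, w < t i) :
    (fun i => if t i = M then w else t i) ∈ R := by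
  classical
  set S₀ := (Finset.image t Finset.univ).filter (fun v => v < M) with hS₀def
  obtain ⟨a₀, ha₀, ha₀S, ha₀surj⟩ := enum_spec S₀
  have ha₀x : ∀ j, a₀ j < M := fun j => (Finset.mem_filter.1 (ha₀S j)).2
  have ha₀val : ∀ j, ∃ i, t i = a₀ j := fun j => by
    obtain ⟨i, _, hi⟩ := Finset.mem_image.1 (Finset.mem_filter.1 (ha₀S j)).1
    exact ⟨i, hi⟩
  have ha₀w : ∀ j, w < a₀ j := fun j => by
    obtain ⟨i, hi⟩ := ha₀val j
    exact hi ▸ hw i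
  have hsurj : ∀ i, t i < M → ∃ j, a₀ j = t i := fun i h =>
    ha₀surj _ (Finset.mem_filter.2 ⟨Finset.mem_image_of_mem t (Finset.mem_univ i), h⟩)
  have hsrc : StrictMono (Fin.snoc a₀ M : Fin (S₀.card+1) → ℚ) := strictMono_snoc ha₀ M ha₀x
  have htgt : StrictMono (Fin.snoc (fun j : Fin S₀.card => Q j) c₁ : Fin (S₀.card+1) → ℚ) :=
    strictMono_snoc (fun i j h => hQ h) c₁ (fun j => hQc j)
  obtain ⟨e₁, he₁⟩ := exists_extend (S₀.card+1) _ _ hsrc htgt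
  have h2 : (g ∘ (⇑e₁ ∘ t)) ∈ R := hg _ (haut e₁ t ht)
  have hsrc2 : StrictMono (Fin.cons (g c₁) (fun j : Fin S₀.card => g (Q j)) : Fin (S₀.card+1) → ℚ) :=
    strictMono_cons (fun i j h => hgQ h) _ (fun j => hB j)
  have htgt2 : StrictMono (Fin.cons w a₀ : Fin (S₀.card+1) → ℚ) := strictMono_cons ha₀ _ ha₀w
  obtain ⟨e₂, he₂⟩ := exists_extend (S₀.card+1) _ _ hsrc2 htgt2
  have h3 := haut e₂ _ h2
  have heq : (⇑e₂ ∘ (g ∘ (⇑e₁ ∘ t))) = fun i => if t i = M then w else t i := by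
    funext i
    simp only [Function.comp_apply]
    by_cases hMi : t i = M
    · have e1M : e₁ M = c₁ := by
        have h' := he₁ (Fin.last S₀.card)
        simpa [Fin.snoc_last] using h'
      have e2c : e₂ (g c₁) = w := by
        have h' := he₂ 0
        simpa [Fin.cons_zero] using h'
      rw [hMi, e1M, e2c, if_pos rfl]
    · have hlt : t i < M := lt_of_le_of_ne (hM i) hMi
      obtain ⟨j, hj⟩ := hsurj i hlt
      rw [← hj, if_neg (show ¬ a₀ j = M from ne_of_lt (ha₀x j))]
      have e1j : e₁ (a₀ j) = Q j := by
        have h' := he₁ (Fin.castSucc j)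
        simpa [Fin.snoc_castSucc] using h'
      rw [e1j]
      have h'' := he₂ (Fin.succ j)
      simpa [Fin.cons_succ] using h''
  exact heq ▸ h3

lemma mergeA {n : ℕ} {R : Set (Fin n → ℚ)} {g : ℚ → ℚ}
    (hg : PresU g R) (haut : ∀ e : ℚ ≃o ℚ, PresU (⇑e) R)
    {Q : ℕ → ℚ} {c₁ c₂ : ℚ}
    (hQ : StrictMono Q) (hQc : ∀ i, Q i < c₁) (hc : c₁ < c₂)
    (hgQ : StrictMono (g ∘ Q)) (hgc : g c₁ = g c₂)
    (hA : ∀ i, g (Q i) < g c₁)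
    {t : Fin n → ℚ} (ht : t ∈ R) {x y w : ℚ}
    (hxy : x < y)
    (htri : ∀ i, t i < x ∨ t i = x ∨ t i = y)
    (hw : ∀ i, t i < x → t i < w) :
    (fun i => if x ≤ t i then w else t i) ∈ R := by
  classical
  set S₀ := (Finset.image t Finset.univ).filter (fun v => v < x) with hS₀def
  obtain ⟨a₀, ha₀, ha₀S, ha₀surj⟩ := enum_spec S₀
  have ha₀x : ∀ j, a₀ j < x := fun j => (Finset.mem_filter.1 (ha₀S j)).2
  have ha₀val : ∀ j, ∃ i, t i = a₀ j := fun j => by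
    obtain ⟨i, _, hi⟩ := Finset.mem_image.1 (Finset.mem_filter.1 (ha₀S j)).1
    exact ⟨i, hi⟩
  have ha₀w : ∀ j, a₀ j < w := fun j => by
    obtain ⟨i, hi⟩ := ha₀val j
    exact hi ▸ hw i (hi ▸ ha₀x j)
  have hsurj : ∀ i, t i < x → ∃ j, a₀ j = t i := fun i h =>
    ha₀surj _ (Finset.mem_filter.2 ⟨Finset.mem_image_of_mem t (Finset.mem_univ i), h⟩)
  have hsrc : StrictMono (Fin.snoc (Fin.snoc a₀ x : Fin (S₀.card+1) → ℚ) y : Fin (S₀.card+2) → ℚ) := by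
    refine strictMono_snoc (strictMono_snoc ha₀ x ha₀x) y ?_
    intro i
    rcases Fin.eq_castSucc_or_eq_last i with ⟨j, rfl⟩ | rfl
    · simp only [Fin.snoc_castSucc]; exact (ha₀x j).trans hxy
    · simp only [Fin.snoc_last]; exact hxy
  have htgt : StrictMono (Fin.snoc (Fin.snoc (fun j : Fin S₀.card => Q j) c₁ : Fin (S₀.card+1) → ℚ) c₂ :
      Fin (S₀.card+2) → ℚ) := by
    refine strictMono_snoc (strictMono_snoc (fun i j h => hQ h) c₁ (fun j => hQc j)) c₂ ?_
    intro i
    rcases Fin.eq_castSucc_or_eq_last i with ⟨j, rfl⟩ | rfl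
    · simp only [Fin.snoc_castSucc]; exact (hQc j).trans hc
    · simp only [Fin.snoc_last]; exact hc
  obtain ⟨e₁, he₁⟩ := exists_extend (S₀.card+2) _ _ hsrc htgt
  have h2 : (g ∘ (⇑e₁ ∘ t)) ∈ R := hg _ (haut e₁ t ht)
  have hsrc2 : StrictMono (Fin.snoc (fun j : Fin S₀.card => g (Q j)) (g c₁) : Fin (S₀.card+1) → ℚ) :=
    strictMono_snoc (fun i j h => hgQ h) _ (fun j => hA j)
  have htgt2 : StrictMono (Fin.snoc a₀ w : Fin (S₀.card+1) → ℚ) := strictMono_snoc ha₀ _ ha₀w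
  obtain ⟨e₂, he₂⟩ := exists_extend (S₀.card+1) _ _ hsrc2 htgt2
  have h3 := haut e₂ _ h2
  have heq : (⇑e₂ ∘ (g ∘ (⇑e₁ ∘ t))) = fun i => if x ≤ t i then w else t i := by
    funext i
    simp only [Function.comp_apply]
    rcases htri i with h | h | h
    · obtain ⟨j, hj⟩ := hsurj i h
      rw [← hj, if_neg (not_le.2 (ha₀x j))]
      have e1j : e₁ (a₀ j) = Q j := by
        have h' := he₁ (Fin.castSucc (Fin.castSucc j))
        simpa [Fin.snoc_castSucc] using h'
      rw [e1j]
      have h'' := he₂ (Fin.castSucc j)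
      simpa [Fin.snoc_castSucc] using h''
    · have e1x : e₁ x = c₁ := by
        have h' := he₁ (Fin.castSucc (Fin.last S₀.card))
        simpa [Fin.snoc_castSucc, Fin.snoc_last] using h'
      have e2c : e₂ (g c₁) = w := by
        have h' := he₂ (Fin.last S₀.card)
        simpa [Fin.snoc_last] using h'
      rw [h, e1x, e2c, if_pos le_rfl]
    · have e1y : e₁ y = c₂ := by
        have h' := he₁ (Fin.last (S₀.card+1))
        simpa [Fin.snoc_last] using h'
      have e2c : e₂ (g c₁) = w := by
        have h' := he₂ (Fin.last S₀.card)
        simpa [Fin.snoc_last] using h'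
      rw [h, e1y, ← hgc, e2c, if_pos hxy.le]
  exact heq ▸ h3

lemma macroB {n : ℕ} {R : Set (Fin n → ℚ)} {g : ℚ → ℚ}
    (hg : PresU g R) (haut : ∀ e : ℚ ≃o ℚ, PresU (⇑e) R)
    {Q : ℕ → ℚ} {c₁ c₂ : ℚ}
    (hQ : StrictMono Q) (hQc : ∀ i, Q i < c₁) (hc : c₁ < c₂)
    (hgQ : StrictMono (g ∘ Q)) (hgc : g c₁ = g c₂)
    (hB : ∀ i, g c₁ < g (Q i))
    {t : Fin n → ℚ} (ht : t ∈ R) {x y w : ℚ}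
    (hxy : x < y)
    (htri : ∀ i, t i < x ∨ t i = x ∨ t i = y)
    (hw : ∀ i, t i < x → t i < w) :
    (fun i => if x ≤ t i then w else t i) ∈ R := by
  classical
  rcases isEmpty_or_nonempty (Fin n) with hemp | hne0
  · have : (fun i => if x ≤ t i then w else t i) = t := funext fun i => hemp.elim i
    rw [this]; exact ht
  · set C : ℚ := (Finset.image (fun i => |t i|) Finset.univ).max'
      ⟨|t (Classical.arbitrary (Fin n))|,
        Finset.mem_image_of_mem _ (Finset.mem_univ _)⟩ + 1 with hCdef
    have hC : ∀ i, |t i| < C := by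
      intro i
      have h1 := Finset.le_max' (Finset.image (fun i => |t i|) Finset.univ) (|t i|)
        (Finset.mem_image_of_mem _ (Finset.mem_univ i))
      rw [hCdef]; linarith
    have hCt : ∀ i, -C < t i ∧ t i < C := fun i => abs_lt.1 (hC i)
    have key : ∀ (m : ℕ) (S : Finset ℚ),
        S.card ≤ m →
        (∀ v ∈ S, ∃ i, t i = v) →
        (∀ i, t i < x → ∀ v ∈ S, t i ≤ v → t i ∈ S) →
        (fun i => if x ≤ t i then -C else if t i ∈ S then t i else t i - 2*C) ∈ R →
        (fun i => if x ≤ t i then -C else t i - 2*C) ∈ R := by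
      intro m
      induction m with
      | zero =>
        intro S hcard _ _ hP
        have hS : S = ∅ := Finset.card_eq_zero.1 (Nat.le_zero.1 hcard)
        subst hS
        simpa using hP
      | succ m ih =>
        intro S hcard h1 h2 hP
        rcases Finset.eq_empty_or_nonempty S with rfl | hne
        · simpa using hP
        · set M := S.max' hne with hMdef
          obtain ⟨iM, hiM⟩ := h1 M (S.max'_mem hne)
          have hMC1 : -C < M := hiM ▸ (hCt iM).1
          have hMC2 : M < C := hiM ▸ (hCt iM).2
          have hMu : ∀ i, (if x ≤ t i then -C else if t i ∈ S then t i else t i - 2*C) ≤ M := by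
            intro i
            split_ifs with hxi hSi
            · linarith
            · exact S.le_max' _ hSi
            · have := (hCt i).2; linarith
          have hwu : ∀ i, M - 2*C <
              (if x ≤ t i then -C else if t i ∈ S then t i else t i - 2*C) := by
            intro i
            split_ifs with hxi hSi
            · linarith
            · have := (hCt i).1; linarith
            · push_neg at hxi
              have hMti : M < t i := by
                by_contra hle
                push_neg at hle
                exact hSi (h2 i hxi M (S.max'_mem hne) hle)
              linarith
          have hrot := rotateB hg haut hQ hQc hgQ hB hP hMu hwu
          have heq : (fun i => if (if x ≤ t i then -C else if t i ∈ S then t i else t i - 2*C) = M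
                then M - 2*C else (if x ≤ t i then -C else if t i ∈ S then t i else t i - 2*C))
              = fun i => if x ≤ t i then -C else if t i ∈ S.erase M then t i else t i - 2*C := by
            funext i
            by_cases hxi : x ≤ t i
            · rw [if_pos hxi, if_pos hxi, if_neg (show ¬ (-C = M) from ne_of_lt hMC1)]
            · rw [if_neg hxi, if_neg hxi]
              push_neg at hxi
              by_cases hSi : t i ∈ S
              · rw [if_pos hSi]
                by_cases hMi : t i = M
                · rw [if_pos hMi, hMi, if_neg (Finset.notMem_erase M S)]
                · rw [if_neg hMi, if_pos (Finset.mem_erase.2 ⟨hMi, hSi⟩)]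
              · rw [if_neg hSi]
                have hMti : M < t i := by
                  by_contra hle
                  push_neg at hle
                  exact hSi (h2 i hxi M (S.max'_mem hne) hle)
                have hne2 : t i - 2*C ≠ M := by
                  intro hE
                  have h3 : t i - 2*C < -C := by have := (hCt i).2; linarith
                  rw [hE] at h3
                  linarith
                rw [if_neg hne2, if_neg (fun hmem => hSi (Finset.mem_of_mem_erase hmem))]
          refine ih (S.erase M) ?_ (fun v hv => h1 v (Finset.mem_of_mem_erase hv)) ?_ (heq ▸ hrot)
          · have hce : (S.erase M).card = S.card - 1 := by
              rw [hMdef]; exact Finset.card_erase_of_mem (S.max'_mem hne)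
            omega
          · intro i hix v hv hle
            have hvS := Finset.mem_of_mem_erase hv
            have hvne := Finset.ne_of_mem_erase hv
            refine Finset.mem_erase.2 ⟨?_, h2 i hix v hvS hle⟩
            intro hEq
            exact hvne (le_antisymm (S.le_max' v hvS) (hEq ▸ hle))
    set Sf := (Finset.image t Finset.univ).filter (fun v => v < x) with hSfdef
    have hPf : (fun i => if x ≤ t i then -C else if t i ∈ Sf then t i else t i - 2*C) ∈ R := by
      have hm := mergeB hg haut hQ hQc hc hgQ hgc hB ht hxy htri (w := -C) (fun i => (hCt i).1)
      have : (fun i => if x ≤ t i then (-C : ℚ) else t i)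
          = fun i => if x ≤ t i then -C else if t i ∈ Sf then t i else t i - 2*C := by
        funext i
        by_cases hxi : x ≤ t i
        · rw [if_pos hxi, if_pos hxi]
        · rw [if_neg hxi, if_neg hxi]
          push_neg at hxi
          have hmemf : t i ∈ Sf := by
            rw [hSfdef]
            exact Finset.mem_filter.2 ⟨Finset.mem_image_of_mem t (Finset.mem_univ i), hxi⟩
          rw [if_pos hmemf]
      exact this ▸ hm
    have hfin := key Sf.card Sf le_rfl
      (fun v hv => by
        obtain ⟨i, _, hi⟩ := Finset.mem_image.1 (Finset.mem_filter.1 hv).1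
        exact ⟨i, hi⟩)
      (fun i hix v _ _ => by
        rw [hSfdef]
        exact Finset.mem_filter.2 ⟨Finset.mem_image_of_mem t (Finset.mem_univ i), hix⟩)
      hPf
    -- final relabel
    set u : Fin n → ℚ := fun i => if x ≤ t i then -C else t i - 2*C with hudef
    set S : Finset ℚ := Finset.image u Finset.univ with hSdef
    set f : ℚ → ℚ := fun v => if v = -C then w else v + 2*C with hfdef
    have hshape : ∀ v ∈ S, v = -C ∨ ∃ i, ¬ x ≤ t i ∧ v = t i - 2*C := by
      intro v hv
      obtain ⟨i, _, hi⟩ := Finset.mem_image.1 hv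
      by_cases hxi : x ≤ t i
      · left; rw [← hi, hudef]; simp [hxi]
      · right; exact ⟨i, hxi, by rw [← hi, hudef]; simp [hxi]⟩
    have hmono : ∀ a ∈ S, ∀ b ∈ S, a < b → f a < f b := by
      intro a ha b hb hab
      rcases hshape a ha with rfl | ⟨i, hix, rfl⟩ <;> rcases hshape b hb with rfl | ⟨j, hjx, rfl⟩
      · exact absurd hab (lt_irrefl _)
      · exfalso
        have := (hCt j).2
        linarith
      · push_neg at hix
        have hne1 : t i - 2*C ≠ -C := by
          have := (hCt i).2; intro hE; linarith
        rw [hfdef]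
        simp only [if_neg hne1, if_pos rfl]
        have : t i - 2*C + 2*C = t i := by ring
        rw [this]
        exact hw i hix
      · have hne1 : t i - 2*C ≠ -C := by
          have := (hCt i).2; intro hE; linarith
        have hne2 : t j - 2*C ≠ -C := by
          have := (hCt j).2; intro hE; linarith
        rw [hfdef]
        simp only [if_neg hne1, if_neg hne2]
        linarith
    obtain ⟨e, he⟩ := extend_finset S f hmono
    have h4 := haut e _ hfin
    have heq2 : (⇑e ∘ u) = fun i => if x ≤ t i then w else t i := by
      funext i
      have hmem : u i ∈ S := Finset.mem_image_of_mem u (Finset.mem_univ i)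
      simp only [Function.comp_apply, he _ hmem]
      by_cases hxi : x ≤ t i
      · have hui : u i = -C := by rw [hudef]; simp [hxi]
        rw [if_pos hxi, hui, hfdef]
        simp
      · have hui : u i = t i - 2*C := by rw [hudef]; simp [hxi]
        have hne1 : t i - 2*C ≠ -C := by
          have := (hCt i).2; intro hE; linarith
        rw [if_neg hxi, hui, hfdef]
        simp only [if_neg hne1]
        ring
    exact heq2 ▸ h4

lemma main_from_macro {n : ℕ} {R : Set (Fin n → ℚ)}
    (haut : ∀ e : ℚ ≃o ℚ, PresU (⇑e) R)
    (mac : ∀ t ∈ R, ∀ x y w : ℚ, x < y →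
      (∀ i, t i < x ∨ t i = x ∨ t i = y) →
      (∀ i, t i < x → t i < w) →
      (fun i => if x ≤ t i then w else t i) ∈ R) :
    PresU (fun x : ℚ => min x 0) R := by
  classical
  have H : ∀ (m : ℕ) (t : Fin n → ℚ), t ∈ R →
      ((Finset.image t Finset.univ).filter (fun v => 0 ≤ v)).card ≤ m →
      ((fun x : ℚ => min x 0) ∘ t) ∈ R := by
    intro m
    induction m with
    | zero =>
      intro t ht hcard
      have hF : ((Finset.image t Finset.univ).filter (fun v => 0 ≤ v)) = ∅ :=
        Finset.card_eq_zero.1 (Nat.le_zero.1 hcard)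
      have hneg : ∀ i, t i < 0 := by
        intro i
        by_contra h
        push_neg at h
        have : t i ∈ ((Finset.image t Finset.univ).filter (fun v => 0 ≤ v)) :=
          Finset.mem_filter.2 ⟨Finset.mem_image_of_mem t (Finset.mem_univ i), h⟩
        rw [hF] at this
        exact absurd this (Finset.notMem_empty _)
      have : (fun x : ℚ => min x 0) ∘ t = t :=
        funext fun i => min_eq_left (hneg i).le
      rw [this]; exact ht
    | succ m ih =>
      intro t ht hcard
      set F := (Finset.image t Finset.univ).filter (fun v => 0 ≤ v) with hFdef
      rcases le_or_gt F.card m with hle | hgt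
      · exact ih t ht hle
      · have hcF : F.card = m + 1 := le_antisymm hcard hgt
        have hne : F.Nonempty := Finset.card_pos.1 (by omega)
        set y := F.max' hne with hydef
        have hyF : y ∈ F := F.max'_mem hne
        have hy0 : 0 ≤ y := (Finset.mem_filter.1 hyF).2
        have hmemF : ∀ i, 0 ≤ t i → t i ∈ F := fun i h => by
          rw [hFdef]
          exact Finset.mem_filter.2 ⟨Finset.mem_image_of_mem t (Finset.mem_univ i), h⟩
        have htley : ∀ i, t i ≤ y := by
          intro i
          rcases le_or_gt 0 (t i) with h | h
          · exact F.le_max' _ (hmemF i h)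
          · linarith
        rcases Finset.eq_empty_or_nonempty (F.erase y) with he | hne2
        · -- exactly one nonnegative value y
          have huniq : ∀ i, 0 ≤ t i → t i = y := by
            intro i h
            by_contra hne3
            have : t i ∈ F.erase y := Finset.mem_erase.2 ⟨hne3, hmemF i h⟩
            rw [he] at this
            exact absurd this (Finset.notMem_empty _)
          set f : ℚ → ℚ := fun v => if 0 ≤ v then 0 else v with hfdef
          have hmono : ∀ a ∈ Finset.image t Finset.univ, ∀ b ∈ Finset.image t Finset.univ,
              a < b → f a < f b := by
            intro a ha b hb hab
            obtain ⟨i, _, hia⟩ := Finset.mem_image.1 ha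
            obtain ⟨j, _, hjb⟩ := Finset.mem_image.1 hb
            rw [hfdef]
            by_cases h0a : 0 ≤ a <;> by_cases h0b : 0 ≤ b
            · exfalso
              have ha' : a = y := hia ▸ huniq i (hia ▸ h0a)
              have hb' : b = y := hjb ▸ huniq j (hjb ▸ h0b)
              rw [ha', hb'] at hab
              exact absurd hab (lt_irrefl _)
            · exfalso; push_neg at h0b; linarith
            · push_neg at h0a
              simp only [if_neg (not_le.2 h0a), if_pos h0b]
              exact h0a
            · push_neg at h0a h0b
              simp only [if_neg (not_le.2 h0a), if_neg (not_le.2 h0b)]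
              exact hab
          obtain ⟨e, hee⟩ := extend_finset _ f hmono
          have h4 := haut e t ht
          have heq : (⇑e ∘ t) = (fun x : ℚ => min x 0) ∘ t := by
            funext i
            have hmem : t i ∈ Finset.image t Finset.univ :=
              Finset.mem_image_of_mem t (Finset.mem_univ i)
            simp only [Function.comp_apply, hee _ hmem, hfdef]
            rcases le_or_gt 0 (t i) with h | h
            · rw [if_pos h, min_eq_right h]
            · rw [if_neg (not_le.2 h), min_eq_left h.le]
          rw [← heq]; exact h4
        · set x := (F.erase y).max' hne2 with hxdef
          have hxE : x ∈ F.erase y := (F.erase y).max'_mem hne2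
          have hxF : x ∈ F := Finset.mem_of_mem_erase hxE
          have hx0 : 0 ≤ x := (Finset.mem_filter.1 hxF).2
          have hxy : x < y := lt_of_le_of_ne (F.le_max' x hxF) (Finset.ne_of_mem_erase hxE)
          have htri : ∀ i, t i < x ∨ t i = x ∨ t i = y := by
            intro i
            rcases le_or_gt 0 (t i) with h0 | h0
            · by_cases hiy : t i = y
              · right; right; exact hiy
              · have hmE : t i ∈ F.erase y := Finset.mem_erase.2 ⟨hiy, hmemF i h0⟩
                rcases lt_or_eq_of_le ((F.erase y).le_max' _ hmE) with h | h
                · left; rw [hxdef]; exact h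
                · right; left; rw [hxdef]; exact h
            · left; linarith
          have hw : ∀ i, t i < x → t i < x + 1 := fun i h => by linarith
          have ht' := mac t ht x y (x + 1) hxy htri hw
          have hsub : (Finset.image (fun i => if x ≤ t i then x + 1 else t i) Finset.univ).filter
              (fun v => 0 ≤ v) ⊆ insert (x + 1) ((F.erase y).erase x) := by
            intro v hv
            obtain ⟨hv1, hv0⟩ := Finset.mem_filter.1 hv
            obtain ⟨i, _, hvi⟩ := Finset.mem_image.1 hv1
            by_cases hxi : x ≤ t i
            · rw [if_pos hxi] at hvi
              rw [← hvi]
              exact Finset.mem_insert_self _ _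
            · rw [if_neg hxi] at hvi
              push_neg at hxi
              subst hvi
              exact Finset.mem_insert_of_mem (Finset.mem_erase.2 ⟨ne_of_lt hxi,
                Finset.mem_erase.2 ⟨ne_of_lt (hxi.trans hxy), hmemF i hv0⟩⟩)
          have hcard' : ((Finset.image (fun i => if x ≤ t i then x + 1 else t i)
              Finset.univ).filter (fun v => 0 ≤ v)).card ≤ m := by
            have h1 := Finset.card_le_card hsub
            have h2 := Finset.card_insert_le (x + 1) ((F.erase y).erase x)
            have h3 : (F.erase y).card = m := by
              rw [Finset.card_erase_of_mem hyF, hcF]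
              omega
            have h4 : ((F.erase y).erase x).card = m - 1 := by
              rw [Finset.card_erase_of_mem hxE, h3]
            have h5 : 1 ≤ m := by
              by_contra h
              push_neg at h
              interval_cases m
              · rw [Finset.card_eq_zero] at h3
                rw [h3] at hxE
                exact absurd hxE (Finset.notMem_empty _)
            omega
          have hic : (fun x : ℚ => min x 0) ∘ (fun i => if x ≤ t i then x + 1 else t i)
              = (fun x : ℚ => min x 0) ∘ t := by
            funext i
            simp only [Function.comp_apply]
            by_cases hxi : x ≤ t i
            · rw [if_pos hxi, min_eq_right (by linarith), min_eq_right (by linarith)]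
            · rw [if_neg hxi]
          have := ih _ ht' hcard'
          rw [hic] at this
          exact this
  intro t ht
  exact H _ t ht le_rfl

end

end Stmt19

theorem stmt_19 (n : ℕ) (R : Set (Fin n → ℚ)) (g : ℚ → ℚ)
    (hg : PresU g R)
    (haut : ∀ e : ℚ ≃o ℚ, PresU (⇑e) R)
    (q : ℕ → ℚ) (c₁ c₂ : ℚ)
    (hq : StrictMono q) (hqc : ∀ i, q i < c₁) (hc : c₁ < c₂)
    (hgq : StrictMono (g ∘ q)) (hgc : g c₁ = g c₂) :
    PresU (fun x : ℚ => min x 0) R := by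
  classical
  by_cases hA : ∀ i, g (q i) < g c₁
  · exact Stmt19.main_from_macro haut (fun t ht x y w hxy htri hw =>
      Stmt19.mergeA hg haut hq hqc hc hgq hgc hA ht hxy htri hw)
  · push_neg at hA
    obtain ⟨i₀, hi₀⟩ := hA
    set Q : ℕ → ℚ := fun j => q (i₀ + 1 + j) with hQdef
    have hQ : StrictMono Q := fun a b h => hq (by omega)
    have hQc : ∀ j, Q j < c₁ := fun j => hqc _
    have hgQ : StrictMono (g ∘ Q) := fun a b h => hgq (show i₀ + 1 + a < i₀ + 1 + b by omega)
    have hB : ∀ j, g c₁ < g (Q j) :=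
      fun j => lt_of_le_of_lt hi₀ (hgq (show i₀ < i₀ + 1 + j by omega))
    exact Stmt19.main_from_macro haut (fun t ht x y w hxy htri hw =>
      Stmt19.macroB hg haut hQ hQc hc hgQ hgc hB ht hxy htri hw)
end
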